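/- Let c₂ ∈ A be pseudo-invariant, i.e. Σ S(a₍₁₎)c₂a₍₂₎ = ε(a)c₂ for all a ∈ A. Writing Φ = Σ Xν⊗Yν⊗Zν, the element C₂ = Σν S(Xν) c₂ Yν β S(Zν) is central in A, and moreover c₂ = C₂α = αC₂. -/

import Mathlib

open TensorProduct

noncomputable section

namespace QH

variable (K A : Type*) [Field K] [Ring A] [Algebra K A]

/-- multiply the three legs of `A ⊗ (A ⊗ A)` together. -/
def mul3 : A ⊗[K] (A ⊗[K] A) →ₗ[K] A :=
  (LinearMap.mul' K A).comp
    (TensorProduct.map LinearMap.id (LinearMap.mul' K A))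

/-- flip of legs 2 and 3 of `A ⊗ (A ⊗ A)`. -/
def σ23 : A ⊗[K] (A ⊗[K] A) →ₐ[K] A ⊗[K] (A ⊗[K] A) :=
  Algebra.TensorProduct.map (AlgHom.id K A)
    (Algebra.TensorProduct.comm K A A).toAlgHom

/-- flip of legs 1 and 2 of `A ⊗ (A ⊗ A)`. -/
def σ12 : A ⊗[K] (A ⊗[K] A) →ₐ[K] A ⊗[K] (A ⊗[K] A) :=
  (Algebra.TensorProduct.assoc K K K A A A).toAlgHom.comp
    ((Algebra.TensorProduct.map
        (Algebra.TensorProduct.comm K A A).toAlgHom (AlgHom.id K A)).comp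
      (Algebra.TensorProduct.assoc K K K A A A).symm.toAlgHom)

/-- embedding of `A ⊗ A` into legs 1,2 of `A ⊗ (A ⊗ A)`. -/
def leg12 : A ⊗[K] A →ₐ[K] A ⊗[K] (A ⊗[K] A) :=
  Algebra.TensorProduct.map (AlgHom.id K A)
    (Algebra.TensorProduct.includeLeft : A →ₐ[K] A ⊗[K] A)

/-- embedding of `A ⊗ A` into legs 2,3 of `A ⊗ (A ⊗ A)`. -/
def leg23 : A ⊗[K] A →ₐ[K] A ⊗[K] (A ⊗[K] A) :=
  Algebra.TensorProduct.includeRight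

/-- embedding of `A ⊗ A` into legs 1,3 of `A ⊗ (A ⊗ A)`. -/
def leg13 : A ⊗[K] A →ₐ[K] A ⊗[K] (A ⊗[K] A) :=
  Algebra.TensorProduct.map (AlgHom.id K A)
    (Algebra.TensorProduct.includeRight : A →ₐ[K] A ⊗[K] A)

variable {K A} in
/-- `Δ ⊗ 1`, landing in `A ⊗ (A ⊗ A)`. -/
def Δ1 (Δ : A →ₐ[K] A ⊗[K] A) : A ⊗[K] A →ₐ[K] A ⊗[K] (A ⊗[K] A) :=
  (Algebra.TensorProduct.assoc K K K A A A).toAlgHom.comp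
    (Algebra.TensorProduct.map Δ (AlgHom.id K A))

variable {K A} in
/-- `1 ⊗ Δ`. -/
def oneΔ (Δ : A →ₐ[K] A ⊗[K] A) : A ⊗[K] A →ₐ[K] A ⊗[K] (A ⊗[K] A) :=
  Algebra.TensorProduct.map (AlgHom.id K A) Δ

variable {K A} in
/-- for `t = Σ tᵢ ⊗ tⁱ`, this is `Σ tᵢ * b * S tⁱ`. -/
def adE (S : A →ₗ[K] A) (b : A) (t : A ⊗[K] A) : A :=
  (LinearMap.mul' K A)
    ((TensorProduct.map LinearMap.id ((LinearMap.mulLeft K b).comp S)) t)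

variable {K A} in
/-- for `t = Σ tᵢ ⊗ tⁱ`, this is `Σ S(tᵢ) * b * tⁱ`. -/
def antiAdE (S : A →ₗ[K] A) (b : A) (t : A ⊗[K] A) : A :=
  (LinearMap.mul' K A)
    ((TensorProduct.map ((LinearMap.mulRight K b).comp S) LinearMap.id) t)

variable {K A} in
/-- the adjoint action `Ad a · b = Σ a₍₁₎ b S(a₍₂₎)`. -/
def ad (Δ : A →ₐ[K] A ⊗[K] A) (S : A →ₗ[K] A) (a b : A) : A :=
  adE S b (Δ a)

variable {K A} in
/-- the anti-adjoint action `Σ S(a₍₁₎) b a₍₂₎`. -/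
def antiAd (Δ : A →ₐ[K] A ⊗[K] A) (S : A →ₗ[K] A) (a b : A) : A :=
  antiAdE S b (Δ a)

variable {K A} in
/-- `C₁ = Σν X̄ν c S(Ȳν) α Z̄ν`, applied to `Φ⁻¹ = Σ X̄ν ⊗ Ȳν ⊗ Z̄ν`. -/
def C1inv (S : A →ₗ[K] A) (α c : A) (Φ' : A ⊗[K] (A ⊗[K] A)) : A :=
  mul3 K A ((TensorProduct.map LinearMap.id
    (TensorProduct.map
      ((LinearMap.mulLeft K c).comp ((LinearMap.mulRight K α).comp S))
      LinearMap.id)) Φ')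

variable {K A} in
/-- for `Φ = Σ Xν ⊗ Yν ⊗ Zν`, this is `Σν S(Xν) p Yν q S(Zν)`. -/
def sandwich (S : A →ₗ[K] A) (p q : A) (Φ : A ⊗[K] (A ⊗[K] A)) : A :=
  (LinearMap.mul' K A)
    ((TensorProduct.map ((LinearMap.mulRight K p).comp S)
      ((LinearMap.mul' K A).comp
        (TensorProduct.map LinearMap.id ((LinearMap.mulLeft K q).comp S)))) Φ)

variable {K A} in
/-- the twisted coassociator
`Φ_F = (F ⊗ 1)(Δ ⊗ 1)F · Φ · (1 ⊗ Δ)F⁻¹ (1 ⊗ F⁻¹)`. -/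
def twistΦ (Δ : A →ₐ[K] A ⊗[K] A) (Φ : A ⊗[K] (A ⊗[K] A))
    (F F' : A ⊗[K] A) : A ⊗[K] (A ⊗[K] A) :=
  leg12 K A F * Δ1 Δ F * Φ * oneΔ Δ F' * leg23 K A F'

variable {K A} in
/-- the `u`-operator `u = Σ S(Yν β S(Zν)) S(eⁱ) α eᵢ Xν`. -/
def uOp (S : A →ₗ[K] A) (α β : A) (Φ : A ⊗[K] (A ⊗[K] A)) (R : A ⊗[K] A) : A :=
  (LinearMap.mul' K A)
    ((TensorProduct.map
        ((LinearMap.mulRight K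
            ((LinearMap.mul' K A)
              ((TensorProduct.map ((LinearMap.mulRight K α).comp S) LinearMap.id)
                ((TensorProduct.comm K A A) R)))).comp S)
        LinearMap.id)
      ((TensorProduct.comm K A A)
        ((TensorProduct.map LinearMap.id
          ((LinearMap.mul' K A).comp
            (TensorProduct.map LinearMap.id ((LinearMap.mulLeft K β).comp S)))) Φ)))

variable {K A} in
/-- `u⁻¹ = Σ S⁻¹(Xν) S⁻¹(α ēⁱ) ēᵢ Yν β S(Zν)`. -/
def uInvOp (S S' : A →ₗ[K] A) (α β : A) (Φ : A ⊗[K] (A ⊗[K] A))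
    (R' : A ⊗[K] A) : A :=
  (LinearMap.mul' K A)
    ((TensorProduct.map
        ((LinearMap.mulRight K
            ((LinearMap.mul' K A)
              ((TensorProduct.map (S'.comp (LinearMap.mulLeft K α)) LinearMap.id)
                ((TensorProduct.comm K A A) R')))).comp S')
        ((LinearMap.mul' K A).comp
          (TensorProduct.map LinearMap.id ((LinearMap.mulLeft K β).comp S)))) Φ)

variable (W : Type*) [AddCommGroup W] [Module K W] [Module A W]
  [IsScalarTower K A W] [SMulCommClass K A W]

/-- the action `A ⊗[K] W →ₗ[K] W` of `A` on a module `W`. -/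
def actionMap : A ⊗[K] W →ₗ[K] W :=
  TensorProduct.lift
    (LinearMap.mk₂ K (fun a w => a • w)
      (fun a b w => add_smul a b w)
      (fun k a w => smul_assoc k a w)
      (fun a w₁ w₂ => smul_add a w₁ w₂)
      (fun k a w => (smul_comm a k w)))

variable {K A W} in
/-- `y ↦ y • v` as a `K`-linear map `A →ₗ[K] W`. -/
def actOn (v : W) : A →ₗ[K] W :=
  (LinearMap.toSpanSingleton A W v).restrictScalars K

end QH

/-- A quasi-Hopf algebra over a field `K`. -/
structure QuasiHopf (K A : Type*) [Field K] [Ring A] [Algebra K A] where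
  Δ : A →ₐ[K] A ⊗[K] A
  ε : A →ₐ[K] K
  Φ : A ⊗[K] (A ⊗[K] A)
  Φ' : A ⊗[K] (A ⊗[K] A)
  S : A →ₗ[K] A
  α : A
  β : A
  S_one : S 1 = 1
  S_mul : ∀ a b : A, S (a * b) = S b * S a
  Φ_inv : Φ * Φ' = 1
  Φ_inv' : Φ' * Φ = 1
  quasi_coassoc : ∀ a : A,
    Φ * (QH.oneΔ Δ) (Δ a) = (QH.Δ1 Δ) (Δ a) * Φ
  pentagon :
    (Algebra.TensorProduct.assoc K K K A A (A ⊗[K] A))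
        ((Algebra.TensorProduct.map Δ (AlgHom.id K (A ⊗[K] A))) Φ) *
      (Algebra.TensorProduct.map (AlgHom.id K A)
        (Algebra.TensorProduct.map (AlgHom.id K A) Δ)) Φ =
    (Algebra.TensorProduct.map (AlgHom.id K A)
        (Algebra.TensorProduct.map (AlgHom.id K A)
          (Algebra.TensorProduct.includeLeft : A →ₐ[K] A ⊗[K] A))) Φ *
      (Algebra.TensorProduct.map (AlgHom.id K A) (QH.Δ1 Δ)) Φ *
      (Algebra.TensorProduct.includeRight :
        (A ⊗[K] (A ⊗[K] A)) →ₐ[K] A ⊗[K] (A ⊗[K] (A ⊗[K] A))) Φ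
  counit_left : ∀ a : A,
    (Algebra.TensorProduct.lid K A)
      ((Algebra.TensorProduct.map ε (AlgHom.id K A)) (Δ a)) = a
  counit_right : ∀ a : A,
    (Algebra.TensorProduct.rid K K A)
      ((Algebra.TensorProduct.map (AlgHom.id K A) ε) (Δ a)) = a
  counit_Φ : (Algebra.TensorProduct.map (AlgHom.id K A)
      ((Algebra.TensorProduct.lid K A).toAlgHom.comp
        (Algebra.TensorProduct.map ε (AlgHom.id K A)))) Φ = 1
  antipode_α : ∀ a : A, QH.antiAdE S α (Δ a) = ε a • α
  antipode_β : ∀ a : A, QH.adE S β (Δ a) = ε a • β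
  hopf3 : QH.mul3 K A
      ((TensorProduct.map LinearMap.id
        (TensorProduct.map ((LinearMap.mulLeft K β).comp S)
          (LinearMap.mulLeft K α))) Φ') = 1
  hopf4 : QH.sandwich S α β Φ = 1

/-- A quasi-triangular quasi-Hopf algebra. -/
structure QuasiTriangular (K A : Type*) [Field K] [Ring A] [Algebra K A]
    extends QuasiHopf K A where
  R : A ⊗[K] A
  R' : A ⊗[K] A
  R_inv : R * R' = 1
  R_inv' : R' * R = 1
  intertwine : ∀ a : A,
    (Algebra.TensorProduct.comm K A A) (Δ a) * R = R * Δ a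
  hexagon1 : (QH.Δ1 Δ) R =
    QH.σ23 K A (QH.σ12 K A Φ') * QH.leg13 K A R * QH.σ23 K A Φ *
      QH.leg23 K A R * Φ'
  hexagon2 : (QH.oneΔ Δ) R =
    QH.σ12 K A (QH.σ23 K A Φ) * QH.leg13 K A R * QH.σ12 K A Φ' *
      QH.leg12 K A R * Φ

section StatementTenAux0
variable {K A : Type*} [Field K] [Ring A] [Algebra K A]

set_option maxHeartbeats 2000000 in
set_option synthInstance.maxHeartbeats 1000000 in
noncomputable instance : MulZeroClass (A ⊗[K] (A ⊗[K] (A ⊗[K] A))) := by infer_instance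

set_option maxHeartbeats 2000000 in
set_option synthInstance.maxHeartbeats 1000000 in
instance : LeftDistribClass (A ⊗[K] (A ⊗[K] (A ⊗[K] A))) := ⟨fun a b c => by
  exact @mul_add _ _ _ (Distrib.leftDistribClass _) a b c⟩

set_option maxHeartbeats 2000000 in
set_option synthInstance.maxHeartbeats 1000000 in
instance : RightDistribClass (A ⊗[K] (A ⊗[K] (A ⊗[K] A))) := ⟨fun a b c => by
  exact @add_mul _ _ _ (Distrib.rightDistribClass _) a b c⟩

end StatementTenAux0
section StatementTenAux
variable {K A : Type*} [Field K] [Ring A] [Algebra K A]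

namespace QHAux

@[simp] lemma adE_tmul (S : A →ₗ[K] A) (b y z : A) :
    QH.adE S b (y ⊗ₜ[K] z) = y * (b * S z) := by
  simp [QH.adE]

@[simp] lemma antiAdE_tmul (S : A →ₗ[K] A) (b y z : A) :
    QH.antiAdE S b (y ⊗ₜ[K] z) = S y * b * z := by
  simp [QH.antiAdE]

@[simp] lemma sandwich_tmul (S : A →ₗ[K] A) (b q x y z : A) :
    QH.sandwich S b q (x ⊗ₜ[K] (y ⊗ₜ[K] z)) = (S x * b) * (y * (q * S z)) := by
  simp [QH.sandwich]

lemma adE_add (S : A →ₗ[K] A) (b : A) (t t' : A ⊗[K] A) :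
    QH.adE S b (t + t') = QH.adE S b t + QH.adE S b t' := by simp [QH.adE]

lemma antiAdE_add (S : A →ₗ[K] A) (b : A) (t t' : A ⊗[K] A) :
    QH.antiAdE S b (t + t') = QH.antiAdE S b t + QH.antiAdE S b t' := by simp [QH.antiAdE]

@[simp] lemma adE_zero (S : A →ₗ[K] A) (b : A) : QH.adE S b 0 = 0 := by simp [QH.adE]
@[simp] lemma antiAdE_zero (S : A →ₗ[K] A) (b : A) : QH.antiAdE S b 0 = 0 := by simp [QH.antiAdE]

lemma sandwich_zero (S : A →ₗ[K] A) (b q : A) : QH.sandwich S b q 0 = 0 := by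
  simp [QH.sandwich]

lemma sandwich_add (S : A →ₗ[K] A) (b q : A) (t t' : A ⊗[K] (A ⊗[K] A)) :
    QH.sandwich S b q (t + t') = QH.sandwich S b q t + QH.sandwich S b q t' := by
  simp [QH.sandwich]

variable (Q : QuasiHopf K A) (p : A)

/-- `y ⊗ z ↦ S y * p * z`. -/
def Lp : A ⊗[K] A →ₗ[K] A :=
  (LinearMap.mul' K A).comp
    (TensorProduct.map ((LinearMap.mulRight K p).comp Q.S) LinearMap.id)

@[simp] lemma Lp_tmul (y z : A) : Lp Q p (y ⊗ₜ[K] z) = Q.S y * p * z := by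
  simp [Lp]

lemma Lp_eq_antiAdE (t : A ⊗[K] A) : Lp Q p t = QH.antiAdE Q.S p t := rfl

/-- `y ⊗ z ↦ S y * z`. -/
def Ls : A ⊗[K] A →ₗ[K] A :=
  (LinearMap.mul' K A).comp (TensorProduct.map Q.S LinearMap.id)

@[simp] lemma Ls_tmul (y z : A) : Ls Q (y ⊗ₜ[K] z) = Q.S y * z := by
  simp [Ls]

/-- `x ⊗ (y ⊗ z) ↦ x * (S y * p * z)`. -/
def H0 : A ⊗[K] (A ⊗[K] A) →ₗ[K] A :=
  (LinearMap.mul' K A).comp (TensorProduct.map LinearMap.id (Lp Q p))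

@[simp] lemma H0_tmul (x : A) (v : A ⊗[K] A) :
    H0 Q p (x ⊗ₜ[K] v) = x * Lp Q p v := by
  simp [H0]

/-- `x ⊗ (y ⊗ z) ↦ (x*β) * (S y * p * z)`. -/
def Hb : A ⊗[K] (A ⊗[K] A) →ₗ[K] A :=
  (LinearMap.mul' K A).comp (TensorProduct.map (LinearMap.mulRight K Q.β) (Lp Q p))

@[simp] lemma Hb_tmul (x : A) (v : A ⊗[K] A) :
    Hb Q p (x ⊗ₜ[K] v) = (x * Q.β) * Lp Q p v := by
  simp [Hb]

/-- `x ⊗ (y ⊗ z) ↦ (x*β) * (S y * z)`. -/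
def Hb0 : A ⊗[K] (A ⊗[K] A) →ₗ[K] A :=
  (LinearMap.mul' K A).comp (TensorProduct.map (LinearMap.mulRight K Q.β) (Ls Q))

@[simp] lemma Hb0_tmul (x : A) (v : A ⊗[K] A) :
    Hb0 Q (x ⊗ₜ[K] v) = (x * Q.β) * Ls Q v := by
  simp [Hb0]

/-- `w ⊗ v ↦ (S w * α) * Hb v`. -/
def MM : A ⊗[K] (A ⊗[K] (A ⊗[K] A)) →ₗ[K] A :=
  (LinearMap.mul' K A).comp
    (TensorProduct.map ((LinearMap.mulRight K Q.α).comp Q.S) (Hb Q p))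

@[simp] lemma MM_tmul (w : A) (v : A ⊗[K] (A ⊗[K] A)) :
    MM Q p (w ⊗ₜ[K] v) = (Q.S w * Q.α) * Hb Q p v := by
  simp [MM]

/-- `w ⊗ v ↦ S w * Hb v`. -/
def M0 : A ⊗[K] (A ⊗[K] (A ⊗[K] A)) →ₗ[K] A :=
  (LinearMap.mul' K A).comp (TensorProduct.map Q.S (Hb Q p))

@[simp] lemma M0_tmul (w : A) (v : A ⊗[K] (A ⊗[K] A)) :
    M0 Q p (w ⊗ₜ[K] v) = Q.S w * Hb Q p v := by
  simp [M0]

/-- `w ⊗ v ↦ (S w * α) * Hb0 v`. -/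
def M2 : A ⊗[K] (A ⊗[K] (A ⊗[K] A)) →ₗ[K] A :=
  (LinearMap.mul' K A).comp
    (TensorProduct.map ((LinearMap.mulRight K Q.α).comp Q.S) (Hb0 Q))

@[simp] lemma M2_tmul (w : A) (v : A ⊗[K] (A ⊗[K] A)) :
    M2 Q (w ⊗ₜ[K] v) = (Q.S w * Q.α) * Hb0 Q v := by
  simp [M2]

/-- `w ⊗ v ↦ (S w * α) * H0 v`. -/
def M0' : A ⊗[K] (A ⊗[K] (A ⊗[K] A)) →ₗ[K] A :=
  (LinearMap.mul' K A).comp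
    (TensorProduct.map ((LinearMap.mulRight K Q.α).comp Q.S) (H0 Q p))

@[simp] lemma M0'_tmul (w : A) (v : A ⊗[K] (A ⊗[K] A)) :
    M0' Q p (w ⊗ₜ[K] v) = (Q.S w * Q.α) * H0 Q p v := by
  simp [M0']

/-- kill the first leg of `A ⊗ A`. -/
def k1 : A ⊗[K] A →ₐ[K] A :=
  (Algebra.TensorProduct.lid K A).toAlgHom.comp
    (Algebra.TensorProduct.map Q.ε (AlgHom.id K A))

@[simp] lemma k1_tmul (x y : A) : k1 Q (x ⊗ₜ[K] y) = Q.ε x • y := by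
  simp [k1]

/-- kill the second leg of `A ⊗ A`. -/
def k2 : A ⊗[K] A →ₐ[K] A :=
  (Algebra.TensorProduct.rid K K A).toAlgHom.comp
    (Algebra.TensorProduct.map (AlgHom.id K A) Q.ε)

@[simp] lemma k2_tmul (x y : A) : k2 Q (x ⊗ₜ[K] y) = Q.ε y • x := by
  simp [k2]

lemma k1_Δ (a : A) : k1 Q (Q.Δ a) = a := by
  have := Q.counit_left a
  simpa [k1] using this

lemma k2_Δ (a : A) : k2 Q (Q.Δ a) = a := by
  have := Q.counit_right a
  simpa [k2] using this

/-- kill leg 1 of `A ⊗ (A ⊗ A)`. -/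
def K1 : A ⊗[K] (A ⊗[K] A) →ₐ[K] A ⊗[K] A :=
  (Algebra.TensorProduct.lid K (A ⊗[K] A)).toAlgHom.comp
    (Algebra.TensorProduct.map Q.ε (AlgHom.id K (A ⊗[K] A)))

@[simp] lemma K1_tmul (x : A) (v : A ⊗[K] A) : K1 Q (x ⊗ₜ[K] v) = Q.ε x • v := by
  simp [K1]

/-- kill leg 2 of `A ⊗ (A ⊗ A)`. -/
def K2 : A ⊗[K] (A ⊗[K] A) →ₐ[K] A ⊗[K] A :=
  Algebra.TensorProduct.map (AlgHom.id K A) (k1 Q)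

@[simp] lemma K2_tmul (x : A) (v : A ⊗[K] A) : K2 Q (x ⊗ₜ[K] v) = x ⊗ₜ k1 Q v := by
  simp [K2]

/-- kill leg 3 of `A ⊗ (A ⊗ A)`. -/
def K3 : A ⊗[K] (A ⊗[K] A) →ₐ[K] A ⊗[K] A :=
  Algebra.TensorProduct.map (AlgHom.id K A) (k2 Q)

@[simp] lemma K3_tmul (x : A) (v : A ⊗[K] A) : K3 Q (x ⊗ₜ[K] v) = x ⊗ₜ k2 Q v := by
  simp [K3]

lemma K2_Φ : K2 Q Q.Φ = 1 := Q.counit_Φ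

end QHAux
end StatementTenAux
section StatementTenAux2
set_option maxHeartbeats 1000000
set_option synthInstance.maxHeartbeats 100000
variable {K A : Type*} [Field K] [Ring A] [Algebra K A]
namespace QHAux
variable (Q : QuasiHopf K A)

/-- `ε` on global leg 2 of the fourfold tensor product. -/
def Xi2 : A ⊗[K] (A ⊗[K] (A ⊗[K] A)) →ₐ[K] A ⊗[K] (A ⊗[K] A) :=
  Algebra.TensorProduct.map (AlgHom.id K A) (K1 Q)

@[simp] lemma Xi2_tmul (w : A) (v : A ⊗[K] (A ⊗[K] A)) :
    Xi2 Q (w ⊗ₜ[K] v) = w ⊗ₜ K1 Q v := by simp [Xi2]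

/-- `ε` on global leg 3 of the fourfold tensor product. -/
def Xi3 : A ⊗[K] (A ⊗[K] (A ⊗[K] A)) →ₐ[K] A ⊗[K] (A ⊗[K] A) :=
  Algebra.TensorProduct.map (AlgHom.id K A) (K2 Q)

@[simp] lemma Xi3_tmul (w : A) (v : A ⊗[K] (A ⊗[K] A)) :
    Xi3 Q (w ⊗ₜ[K] v) = w ⊗ₜ K2 Q v := by simp [Xi3]

lemma Xi2_assoc4 (t : A ⊗[K] A) (v : A ⊗[K] A) :
    Xi2 Q ((Algebra.TensorProduct.assoc K K K A A (A ⊗[K] A)) (t ⊗ₜ v)) = (k2 Q t) ⊗ₜ v := by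
  induction t using TensorProduct.induction_on with
  | zero => simp [zero_tmul]
  | tmul c d => simp [smul_tmul', tmul_smul]
  | add t₁ t₂ h₁ h₂ => simp only [add_tmul, map_add, h₁, h₂]

lemma Xi3_assoc4 (t : A ⊗[K] A) (v : A ⊗[K] A) :
    Xi3 Q ((Algebra.TensorProduct.assoc K K K A A (A ⊗[K] A)) (t ⊗ₜ v)) =
      (Algebra.TensorProduct.assoc K K K A A A) (t ⊗ₜ k1 Q v) := by
  induction t using TensorProduct.induction_on with
  | zero => simp [zero_tmul]
  | tmul c d => simp
  | add t₁ t₂ h₁ h₂ => simp only [add_tmul, map_add, h₁, h₂]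

lemma K1_assoc (t : A ⊗[K] A) (b : A) :
    K1 Q ((Algebra.TensorProduct.assoc K K K A A A) (t ⊗ₜ b)) = (k1 Q t) ⊗ₜ b := by
  induction t using TensorProduct.induction_on with
  | zero => simp [zero_tmul]
  | tmul c d => simp [smul_tmul']
  | add t₁ t₂ h₁ h₂ => simp only [add_tmul, map_add, h₁, h₂]

lemma K2_assoc (t : A ⊗[K] A) (b : A) :
    K2 Q ((Algebra.TensorProduct.assoc K K K A A A) (t ⊗ₜ b)) = (k2 Q t) ⊗ₜ b := by
  induction t using TensorProduct.induction_on with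
  | zero => simp [zero_tmul]
  | tmul c d => simp [smul_tmul', tmul_smul]
  | add t₁ t₂ h₁ h₂ => simp only [add_tmul, map_add, h₁, h₂]

lemma Δ1_tmul (y z : A) :
    (QH.Δ1 Q.Δ) (y ⊗ₜ[K] z) = (Algebra.TensorProduct.assoc K K K A A A) (Q.Δ y ⊗ₜ z) := by
  simp [QH.Δ1]

lemma oneΔ_tmul (a b : A) :
    (QH.oneΔ Q.Δ) (a ⊗ₜ[K] b) = a ⊗ₜ Q.Δ b := by
  simp [QH.oneΔ]

-- evaluation of Ξ₂ on the five pentagon factors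
lemma Xi2_P1 (u : A ⊗[K] (A ⊗[K] A)) :
    Xi2 Q ((Algebra.TensorProduct.assoc K K K A A (A ⊗[K] A))
      ((Algebra.TensorProduct.map Q.Δ (AlgHom.id K (A ⊗[K] A))) u)) = u := by
  induction u using TensorProduct.induction_on with
  | zero => simp
  | tmul x v => rw [Algebra.TensorProduct.map_tmul, Xi2_assoc4, k2_Δ]; rfl
  | add u₁ u₂ h₁ h₂ => simp only [map_add, h₁, h₂]

lemma Xi2_P2 (u : A ⊗[K] (A ⊗[K] A)) :
    Xi2 Q ((Algebra.TensorProduct.map (AlgHom.id K A)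
      (Algebra.TensorProduct.map (AlgHom.id K A) Q.Δ)) u) =
    (Algebra.TensorProduct.map (AlgHom.id K A) Q.Δ) (K2 Q u) := by
  induction u using TensorProduct.induction_on with
  | zero => simp
  | tmul x v =>
    induction v using TensorProduct.induction_on with
    | zero => simp
    | tmul y z => simp [tmul_smul]
    | add v₁ v₂ h₁ h₂ => simp only [tmul_add, map_add, h₁, h₂]
  | add u₁ u₂ h₁ h₂ => simp only [map_add, h₁, h₂]

lemma Xi2_P3 (u : A ⊗[K] (A ⊗[K] A)) :
    Xi2 Q ((Algebra.TensorProduct.map (AlgHom.id K A)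
      (Algebra.TensorProduct.map (AlgHom.id K A)
        (Algebra.TensorProduct.includeLeft : A →ₐ[K] A ⊗[K] A))) u) =
    (Algebra.TensorProduct.map (AlgHom.id K A)
      (Algebra.TensorProduct.includeLeft : A →ₐ[K] A ⊗[K] A)) (K2 Q u) := by
  induction u using TensorProduct.induction_on with
  | zero => simp
  | tmul x v =>
    induction v using TensorProduct.induction_on with
    | zero => simp
    | tmul y z =>
      simp only [Algebra.TensorProduct.map_tmul, Xi2_tmul, K1_tmul, K2_tmul, k1_tmul,
        AlgHom.coe_id, id_eq]
      rw [map_smul]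
    | add v₁ v₂ h₁ h₂ => simp only [tmul_add, map_add, h₁, h₂]
  | add u₁ u₂ h₁ h₂ => simp only [map_add, h₁, h₂]

lemma Xi2_P4 (u : A ⊗[K] (A ⊗[K] A)) :
    Xi2 Q ((Algebra.TensorProduct.map (AlgHom.id K A) (QH.Δ1 Q.Δ)) u) = u := by
  induction u using TensorProduct.induction_on with
  | zero => simp
  | tmul x v =>
    induction v using TensorProduct.induction_on with
    | zero => simp
    | tmul y z => rw [Algebra.TensorProduct.map_tmul, Xi2_tmul, Δ1_tmul, K1_assoc, k1_Δ]; rfl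
    | add v₁ v₂ h₁ h₂ => simp only [tmul_add, map_add, h₁, h₂]
  | add u₁ u₂ h₁ h₂ => simp only [map_add, h₁, h₂]

lemma Xi2_P5 (v : A ⊗[K] (A ⊗[K] A)) :
    Xi2 Q ((Algebra.TensorProduct.includeRight :
      (A ⊗[K] (A ⊗[K] A)) →ₐ[K] A ⊗[K] (A ⊗[K] (A ⊗[K] A))) v) =
    (Algebra.TensorProduct.includeRight : (A ⊗[K] A) →ₐ[K] A ⊗[K] (A ⊗[K] A)) (K1 Q v) := by
  simp [Algebra.TensorProduct.includeRight_apply]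

lemma K1_includeRight (v : A ⊗[K] A) :
    K1 Q ((Algebra.TensorProduct.includeRight : (A ⊗[K] A) →ₐ[K] A ⊗[K] (A ⊗[K] A)) v) = v := by
  simp [Algebra.TensorProduct.includeRight_apply]

/-- `(ε ⊗ id ⊗ id) Φ = 1`. -/
lemma K1_Φ : K1 Q Q.Φ = 1 := by
  have h := congrArg (Xi2 Q) Q.pentagon
  rw [map_mul, map_mul, map_mul, Xi2_P1, Xi2_P2, Xi2_P3, Xi2_P4, Xi2_P5, K2_Φ,
    map_one, map_one, mul_one, one_mul] at h
  -- h : Φ = Φ * includeRight (K1 Φ)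
  have h2 : (1 : A ⊗[K] (A ⊗[K] A)) =
      (Algebra.TensorProduct.includeRight : (A ⊗[K] A) →ₐ[K] A ⊗[K] (A ⊗[K] A)) (K1 Q Q.Φ) := by
    calc (1 : A ⊗[K] (A ⊗[K] A)) = Q.Φ' * Q.Φ := Q.Φ_inv'.symm
    _ = Q.Φ' * (Q.Φ * _) := by rw [← h]
    _ = (Q.Φ' * Q.Φ) * _ := by rw [mul_assoc]
    _ = _ := by rw [Q.Φ_inv', one_mul]
  have := congrArg (K1 Q) h2
  rw [K1_includeRight, map_one] at this
  exact this.symm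

end QHAux
end StatementTenAux2
section StatementTenAux3
set_option maxHeartbeats 1000000
set_option synthInstance.maxHeartbeats 100000
variable {K A : Type*} [Field K] [Ring A] [Algebra K A]
namespace QHAux
variable (Q : QuasiHopf K A)

lemma Xi3_P1 (u : A ⊗[K] (A ⊗[K] A)) :
    Xi3 Q ((Algebra.TensorProduct.assoc K K K A A (A ⊗[K] A))
      ((Algebra.TensorProduct.map Q.Δ (AlgHom.id K (A ⊗[K] A))) u)) =
    (Algebra.TensorProduct.assoc K K K A A A)
      ((Algebra.TensorProduct.map Q.Δ (AlgHom.id K A)) (K2 Q u)) := by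
  induction u using TensorProduct.induction_on with
  | zero => simp
  | tmul x v => rw [Algebra.TensorProduct.map_tmul, Xi3_assoc4, K2_tmul,
      Algebra.TensorProduct.map_tmul]; rfl
  | add u₁ u₂ h₁ h₂ => simp only [map_add, h₁, h₂]

lemma Xi3_P2 (u : A ⊗[K] (A ⊗[K] A)) :
    Xi3 Q ((Algebra.TensorProduct.map (AlgHom.id K A)
      (Algebra.TensorProduct.map (AlgHom.id K A) Q.Δ)) u) = u := by
  induction u using TensorProduct.induction_on with
  | zero => simp
  | tmul x v =>
    induction v using TensorProduct.induction_on with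
    | zero => simp
    | tmul y z =>
      simp only [Algebra.TensorProduct.map_tmul, Xi3_tmul, K2_tmul, AlgHom.coe_id, id_eq]
      rw [k1_Δ]
    | add v₁ v₂ h₁ h₂ => simp only [tmul_add, map_add, h₁, h₂]
  | add u₁ u₂ h₁ h₂ => simp only [map_add, h₁, h₂]

lemma Xi3_P3 (u : A ⊗[K] (A ⊗[K] A)) :
    Xi3 Q ((Algebra.TensorProduct.map (AlgHom.id K A)
      (Algebra.TensorProduct.map (AlgHom.id K A)
        (Algebra.TensorProduct.includeLeft : A →ₐ[K] A ⊗[K] A))) u) =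
    (Algebra.TensorProduct.map (AlgHom.id K A)
      (Algebra.TensorProduct.includeLeft : A →ₐ[K] A ⊗[K] A)) (K3 Q u) := by
  induction u using TensorProduct.induction_on with
  | zero => simp
  | tmul x v =>
    induction v using TensorProduct.induction_on with
    | zero => simp
    | tmul y z =>
      simp only [Algebra.TensorProduct.map_tmul, Xi3_tmul, K2_tmul, K3_tmul, k1_tmul, k2_tmul,
        AlgHom.coe_id, id_eq, Algebra.TensorProduct.includeLeft_apply]
      congr 1
      rw [TensorProduct.tmul_smul, TensorProduct.smul_tmul']
    | add v₁ v₂ h₁ h₂ => simp only [tmul_add, map_add, h₁, h₂]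
  | add u₁ u₂ h₁ h₂ => simp only [map_add, h₁, h₂]

lemma Xi3_P4 (u : A ⊗[K] (A ⊗[K] A)) :
    Xi3 Q ((Algebra.TensorProduct.map (AlgHom.id K A) (QH.Δ1 Q.Δ)) u) = u := by
  induction u using TensorProduct.induction_on with
  | zero => simp
  | tmul x v =>
    induction v using TensorProduct.induction_on with
    | zero => simp
    | tmul y z =>
      rw [Algebra.TensorProduct.map_tmul, Xi3_tmul, Δ1_tmul, K2_assoc, k2_Δ]; rfl
    | add v₁ v₂ h₁ h₂ => simp only [tmul_add, map_add, h₁, h₂]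
  | add u₁ u₂ h₁ h₂ => simp only [map_add, h₁, h₂]

lemma Xi3_P5 (v : A ⊗[K] (A ⊗[K] A)) :
    Xi3 Q ((Algebra.TensorProduct.includeRight :
      (A ⊗[K] (A ⊗[K] A)) →ₐ[K] A ⊗[K] (A ⊗[K] (A ⊗[K] A))) v) =
    (Algebra.TensorProduct.includeRight : (A ⊗[K] A) →ₐ[K] A ⊗[K] (A ⊗[K] A)) (K2 Q v) := by
  simp [Algebra.TensorProduct.includeRight_apply]

lemma K3_mapIncludeLeft (s : A ⊗[K] A) :
    K3 Q ((Algebra.TensorProduct.map (AlgHom.id K A)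
      (Algebra.TensorProduct.includeLeft : A →ₐ[K] A ⊗[K] A)) s) = s := by
  induction s using TensorProduct.induction_on with
  | zero => simp
  | tmul x y => simp
  | add s₁ s₂ h₁ h₂ => simp only [map_add, h₁, h₂]

/-- `(id ⊗ id ⊗ ε) Φ = 1`. -/
lemma K3_Φ : K3 Q Q.Φ = 1 := by
  have h := congrArg (Xi3 Q) Q.pentagon
  rw [map_mul, map_mul, map_mul, Xi3_P1, Xi3_P2, Xi3_P3, Xi3_P4, Xi3_P5, K2_Φ,
    map_one, map_one, map_one, mul_one, one_mul] at h
  -- h : Φ = (map id includeLeft) (K3 Φ) * Φ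
  have h2 : (Algebra.TensorProduct.map (AlgHom.id K A)
      (Algebra.TensorProduct.includeLeft : A →ₐ[K] A ⊗[K] A)) (K3 Q Q.Φ) = 1 := by
    have h3 : Q.Φ * Q.Φ' = ((Algebra.TensorProduct.map (AlgHom.id K A)
        (Algebra.TensorProduct.includeLeft : A →ₐ[K] A ⊗[K] A)) (K3 Q Q.Φ) * Q.Φ) * Q.Φ' := by
      rw [← h]
    rw [Q.Φ_inv, mul_assoc, Q.Φ_inv, mul_one] at h3
    exact h3.symm
  have := congrArg (K3 Q) h2
  rwa [K3_mapIncludeLeft, map_one] at this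

end QHAux
end StatementTenAux3
section StatementTenAux4
set_option maxHeartbeats 1000000
set_option synthInstance.maxHeartbeats 100000
variable {K A : Type*} [Field K] [Ring A] [Algebra K A]
namespace QHAux
variable (Q : QuasiHopf K A) (p : A)

lemma i_gen (a : A) (t : A ⊗[K] A) (u : A ⊗[K] (A ⊗[K] A)) :
    Hb Q p ((a ⊗ₜ t) * u) =
      Hb0 Q ((a ⊗ₜ ((1 : A) ⊗ₜ QH.antiAdE Q.S p t)) * u) := by
  induction t using TensorProduct.induction_on with
  | zero => simp [tmul_zero]
  | tmul c d =>
    induction u using TensorProduct.induction_on with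
    | zero => simp
    | tmul x v =>
      induction v using TensorProduct.induction_on with
      | zero => simp [tmul_zero]
      | tmul y z =>
        simp [Algebra.TensorProduct.tmul_mul_tmul, Q.S_mul, mul_assoc]
      | add v₁ v₂ h₁ h₂ => simp only [tmul_add, mul_add, map_add, h₁, h₂]
    | add u₁ u₂ h₁ h₂ => simp only [mul_add, map_add, h₁, h₂]
  | add t₁ t₂ h₁ h₂ =>
    simp only [tmul_add, add_mul, map_add, antiAdE_add, tmul_add, mul_add, h₁, h₂]

lemma i_map (hp : ∀ a, QH.antiAdE Q.S p (Q.Δ a) = Q.ε a • p)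
    (s : A ⊗[K] A) (u : A ⊗[K] (A ⊗[K] A)) :
    Hb Q p ((QH.oneΔ Q.Δ) s * u) =
      Hb0 Q (((k2 Q s) ⊗ₜ ((1 : A) ⊗ₜ p)) * u) := by
  induction s using TensorProduct.induction_on with
  | zero => simp [zero_tmul]
  | tmul a b =>
    rw [oneΔ_tmul, i_gen, hp b, k2_tmul]
    simp only [← TensorProduct.smul_tmul', TensorProduct.tmul_smul, smul_mul_assoc, map_smul]
  | add s₁ s₂ h₁ h₂ =>
    simp only [map_add, add_tmul, add_mul, h₁, h₂]

lemma i_absorb (a : A) (u : A ⊗[K] (A ⊗[K] A)) :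
    Hb0 Q ((a ⊗ₜ ((1 : A) ⊗ₜ p)) * u) = a * Hb Q p u := by
  induction u using TensorProduct.induction_on with
  | zero => simp
  | tmul x v =>
    induction v using TensorProduct.induction_on with
    | zero => simp [tmul_zero]
    | tmul y z => simp [Algebra.TensorProduct.tmul_mul_tmul, mul_assoc]
    | add v₁ v₂ h₁ h₂ => simp only [tmul_add, mul_add, map_add, h₁, h₂]
  | add u₁ u₂ h₁ h₂ => simp only [mul_add, map_add, mul_add, h₁, h₂]

lemma ii_gen (t : A ⊗[K] A) (b : A) (u : A ⊗[K] (A ⊗[K] A)) :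
    Hb Q p (u * (Algebra.TensorProduct.assoc K K K A A A) (t ⊗ₜ b)) =
      H0 Q p (u * ((QH.adE Q.S Q.β t) ⊗ₜ ((1 : A) ⊗ₜ b))) := by
  induction t using TensorProduct.induction_on with
  | zero => simp [zero_tmul]
  | tmul c d =>
    induction u using TensorProduct.induction_on with
    | zero => simp
    | tmul x v =>
      induction v using TensorProduct.induction_on with
      | zero => simp [zero_tmul, tmul_zero]
      | tmul y z =>
        simp [Algebra.TensorProduct.tmul_mul_tmul, Q.S_mul, mul_assoc]
      | add v₁ v₂ h₁ h₂ => simp only [tmul_add, add_mul, map_add, h₁, h₂]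
    | add u₁ u₂ h₁ h₂ => simp only [add_mul, map_add, h₁, h₂]
  | add t₁ t₂ h₁ h₂ =>
    simp only [add_tmul, map_add, adE_add, mul_add, h₁, h₂]

lemma ii_map (s : A ⊗[K] A) (u : A ⊗[K] (A ⊗[K] A)) :
    Hb Q p (u * (QH.Δ1 Q.Δ) s) =
      H0 Q p (u * (Q.β ⊗ₜ ((1 : A) ⊗ₜ (k1 Q s)))) := by
  induction s using TensorProduct.induction_on with
  | zero => simp [zero_tmul]
  | tmul a b =>
    rw [Δ1_tmul, ii_gen, Q.antipode_β a, k1_tmul]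
    simp only [← TensorProduct.smul_tmul', TensorProduct.tmul_smul, mul_smul_comm,
      smul_mul_assoc, map_smul]
  | add s₁ s₂ h₁ h₂ =>
    simp only [map_add, add_tmul, tmul_add, mul_add, h₁, h₂]

lemma ii_absorb (b : A) (u : A ⊗[K] (A ⊗[K] A)) :
    H0 Q p (u * (Q.β ⊗ₜ ((1 : A) ⊗ₜ b))) = Hb Q p u * b := by
  induction u using TensorProduct.induction_on with
  | zero => simp
  | tmul x v =>
    induction v using TensorProduct.induction_on with
    | zero => simp [tmul_zero]
    | tmul y z => simp [Algebra.TensorProduct.tmul_mul_tmul, mul_assoc]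
    | add v₁ v₂ h₁ h₂ => simp only [tmul_add, add_mul, map_add, h₁, h₂]
  | add u₁ u₂ h₁ h₂ => simp only [add_mul, map_add, h₁, h₂]

lemma quasi_coassoc' (a : A) :
    (QH.oneΔ Q.Δ) (Q.Δ a) * Q.Φ' = Q.Φ' * (QH.Δ1 Q.Δ) (Q.Δ a) := by
  have h := Q.quasi_coassoc a
  calc (QH.oneΔ Q.Δ) (Q.Δ a) * Q.Φ'
      = 1 * (QH.oneΔ Q.Δ) (Q.Δ a) * Q.Φ' := by rw [one_mul]
    _ = Q.Φ' * Q.Φ * (QH.oneΔ Q.Δ) (Q.Δ a) * Q.Φ' := by rw [Q.Φ_inv']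
    _ = Q.Φ' * (Q.Φ * (QH.oneΔ Q.Δ) (Q.Δ a)) * Q.Φ' := by rw [mul_assoc Q.Φ' Q.Φ]
    _ = Q.Φ' * ((QH.Δ1 Q.Δ) (Q.Δ a) * Q.Φ) * Q.Φ' := by rw [h]
    _ = Q.Φ' * (QH.Δ1 Q.Δ) (Q.Δ a) * (Q.Φ * Q.Φ') := by
        rw [← mul_assoc, mul_assoc (Q.Φ' * (QH.Δ1 Q.Δ) (Q.Δ a)) Q.Φ Q.Φ']
    _ = Q.Φ' * (QH.Δ1 Q.Δ) (Q.Δ a) := by rw [Q.Φ_inv, mul_one]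

/-- the element `W = Σ X̄ β S(Ȳ) p Z̄` is central. -/
lemma W_central (hp : ∀ a, QH.antiAdE Q.S p (Q.Δ a) = Q.ε a • p) (a : A) :
    a * Hb Q p Q.Φ' = Hb Q p Q.Φ' * a := by
  have l1 : a * Hb Q p Q.Φ' = Hb Q p ((QH.oneΔ Q.Δ) (Q.Δ a) * Q.Φ') := by
    rw [i_map Q p hp, k2_Δ, i_absorb]
  have l2 : Hb Q p (Q.Φ' * (QH.Δ1 Q.Δ) (Q.Δ a)) = Hb Q p Q.Φ' * a := by
    rw [ii_map, k1_Δ, ii_absorb]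
  rw [l1, quasi_coassoc', l2]

end QHAux
end StatementTenAux4
section StatementTenAux5
set_option maxHeartbeats 1000000
set_option synthInstance.maxHeartbeats 100000
variable {K A : Type*} [Field K] [Ring A] [Algebra K A]
namespace QHAux
variable (Q : QuasiHopf K A) (p : A)

lemma c1_gen (t : A ⊗[K] A) (y z : A) (η : A ⊗[K] (A ⊗[K] (A ⊗[K] A))) :
    MM Q p ((Algebra.TensorProduct.assoc K K K A A (A ⊗[K] A)) (t ⊗ₜ (y ⊗ₜ z)) * η) =
      M0 Q p (((1 : A) ⊗ₜ ((QH.antiAdE Q.S Q.α t) ⊗ₜ (y ⊗ₜ z))) * η) := by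
  induction t using TensorProduct.induction_on with
  | zero => simp only [zero_mul, mul_zero, zero_tmul, tmul_zero, map_zero, antiAdE_zero, adE_zero]
  | tmul c d =>
    induction η using TensorProduct.induction_on with
    | zero => simp only [zero_mul, mul_zero, zero_tmul, tmul_zero, map_zero, antiAdE_zero, adE_zero]
    | tmul w' ρ =>
      induction ρ using TensorProduct.induction_on with
      | zero => simp only [zero_mul, mul_zero, zero_tmul, tmul_zero, map_zero, antiAdE_zero, adE_zero]
      | tmul x' σ =>
        induction σ using TensorProduct.induction_on with
        | zero => simp only [zero_mul, mul_zero, zero_tmul, tmul_zero, map_zero, antiAdE_zero, adE_zero]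
        | tmul y' z' =>
          simp [Algebra.TensorProduct.tmul_mul_tmul, Q.S_mul, mul_assoc]
        | add σ₁ σ₂ h₁ h₂ => simp only [add_mul, mul_add, add_tmul, tmul_add, map_add, antiAdE_add, adE_add, h₁, h₂]
      | add ρ₁ ρ₂ h₁ h₂ => simp only [add_mul, mul_add, add_tmul, tmul_add, map_add, antiAdE_add, adE_add, h₁, h₂]
    | add η₁ η₂ h₁ h₂ => simp only [add_mul, mul_add, add_tmul, tmul_add, map_add, antiAdE_add, adE_add, h₁, h₂]
  | add t₁ t₂ h₁ h₂ => simp only [add_mul, mul_add, add_tmul, tmul_add, map_add, antiAdE_add, adE_add, h₁, h₂]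

lemma c1_map (u : A ⊗[K] (A ⊗[K] A)) (η : A ⊗[K] (A ⊗[K] (A ⊗[K] A))) :
    MM Q p ((Algebra.TensorProduct.assoc K K K A A (A ⊗[K] A))
        ((Algebra.TensorProduct.map Q.Δ (AlgHom.id K (A ⊗[K] A))) u) * η) =
      M0 Q p (((1 : A) ⊗ₜ (Q.α ⊗ₜ K1 Q u)) * η) := by
  induction u using TensorProduct.induction_on with
  | zero => simp only [zero_mul, mul_zero, zero_tmul, tmul_zero, map_zero, antiAdE_zero, adE_zero]
  | tmul x v =>
    induction v using TensorProduct.induction_on with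
    | zero => simp only [zero_mul, mul_zero, zero_tmul, tmul_zero, map_zero, antiAdE_zero, adE_zero]
    | tmul y z =>
      simp only [Algebra.TensorProduct.map_tmul, AlgHom.coe_id, id_eq]
      rw [c1_gen, Q.antipode_α x, K1_tmul]
      simp only [← TensorProduct.smul_tmul', TensorProduct.tmul_smul,
        smul_mul_assoc, map_smul]
    | add v₁ v₂ h₁ h₂ => simp only [add_mul, mul_add, add_tmul, tmul_add, map_add, antiAdE_add, adE_add, h₁, h₂]
  | add u₁ u₂ h₁ h₂ => simp only [add_mul, mul_add, add_tmul, tmul_add, map_add, antiAdE_add, adE_add, h₁, h₂]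

lemma c1_absorb (η : A ⊗[K] (A ⊗[K] (A ⊗[K] A))) :
    M0 Q p (((1 : A) ⊗ₜ (Q.α ⊗ₜ ((1 : A) ⊗ₜ[K] (1 : A)))) * η) = MM Q p η := by
  induction η using TensorProduct.induction_on with
  | zero => simp only [zero_mul, mul_zero, zero_tmul, tmul_zero, map_zero, antiAdE_zero, adE_zero]
  | tmul w' ρ =>
    induction ρ using TensorProduct.induction_on with
    | zero => simp only [zero_mul, mul_zero, zero_tmul, tmul_zero, map_zero, antiAdE_zero, adE_zero]
    | tmul x' σ =>
      induction σ using TensorProduct.induction_on with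
      | zero => simp only [zero_mul, mul_zero, zero_tmul, tmul_zero, map_zero, antiAdE_zero, adE_zero]
      | tmul y' z' => simp [Algebra.TensorProduct.tmul_mul_tmul, mul_assoc]
      | add σ₁ σ₂ h₁ h₂ => simp only [add_mul, mul_add, add_tmul, tmul_add, map_add, antiAdE_add, adE_add, h₁, h₂]
    | add ρ₁ ρ₂ h₁ h₂ => simp only [add_mul, mul_add, add_tmul, tmul_add, map_add, antiAdE_add, adE_add, h₁, h₂]
  | add η₁ η₂ h₁ h₂ => simp only [add_mul, mul_add, add_tmul, tmul_add, map_add, antiAdE_add, adE_add, h₁, h₂]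

lemma c2_gen (x y : A) (t : A ⊗[K] A) (η : A ⊗[K] (A ⊗[K] (A ⊗[K] A))) :
    MM Q p ((x ⊗ₜ (y ⊗ₜ t)) * η) =
      M2 Q ((x ⊗ₜ (y ⊗ₜ (((1 : A) ⊗ₜ (QH.antiAdE Q.S p t))))) * η) := by
  induction t using TensorProduct.induction_on with
  | zero => simp only [zero_mul, mul_zero, zero_tmul, tmul_zero, map_zero, antiAdE_zero, adE_zero]
  | tmul c d =>
    induction η using TensorProduct.induction_on with
    | zero => simp only [zero_mul, mul_zero, zero_tmul, tmul_zero, map_zero, antiAdE_zero, adE_zero]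
    | tmul w' ρ =>
      induction ρ using TensorProduct.induction_on with
      | zero => simp only [zero_mul, mul_zero, zero_tmul, tmul_zero, map_zero, antiAdE_zero, adE_zero]
      | tmul x' σ =>
        induction σ using TensorProduct.induction_on with
        | zero => simp only [zero_mul, mul_zero, zero_tmul, tmul_zero, map_zero, antiAdE_zero, adE_zero]
        | tmul y' z' =>
          simp [Algebra.TensorProduct.tmul_mul_tmul, Q.S_mul, mul_assoc]
        | add σ₁ σ₂ h₁ h₂ => simp only [add_mul, mul_add, add_tmul, tmul_add, map_add, antiAdE_add, adE_add, h₁, h₂]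
      | add ρ₁ ρ₂ h₁ h₂ => simp only [add_mul, mul_add, add_tmul, tmul_add, map_add, antiAdE_add, adE_add, h₁, h₂]
    | add η₁ η₂ h₁ h₂ => simp only [add_mul, mul_add, add_tmul, tmul_add, map_add, antiAdE_add, adE_add, h₁, h₂]
  | add t₁ t₂ h₁ h₂ => simp only [add_mul, mul_add, add_tmul, tmul_add, map_add, antiAdE_add, adE_add, h₁, h₂]

/-- auxiliary insertion `x ⊗ y ↦ x ⊗ (y ⊗ (1 ⊗ p))`. -/
def lam3 : A ⊗[K] A →ₗ[K] A ⊗[K] (A ⊗[K] (A ⊗[K] A)) :=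
  TensorProduct.map LinearMap.id
    ((TensorProduct.mk K A (A ⊗[K] A)).flip ((1 : A) ⊗ₜ p))

@[simp] lemma lam3_tmul (x y : A) :
    lam3 p (x ⊗ₜ[K] y) = x ⊗ₜ (y ⊗ₜ ((1 : A) ⊗ₜ p)) := by
  simp [lam3]

lemma c2_map (hp : ∀ a, QH.antiAdE Q.S p (Q.Δ a) = Q.ε a • p)
    (u : A ⊗[K] (A ⊗[K] A)) (η : A ⊗[K] (A ⊗[K] (A ⊗[K] A))) :
    MM Q p ((Algebra.TensorProduct.map (AlgHom.id K A)
        (Algebra.TensorProduct.map (AlgHom.id K A) Q.Δ)) u * η) =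
      M2 Q ((lam3 p (K3 Q u)) * η) := by
  induction u using TensorProduct.induction_on with
  | zero => simp only [zero_mul, mul_zero, zero_tmul, tmul_zero, map_zero, antiAdE_zero, adE_zero]
  | tmul x v =>
    induction v using TensorProduct.induction_on with
    | zero => simp only [zero_mul, mul_zero, zero_tmul, tmul_zero, map_zero, antiAdE_zero, adE_zero]
    | tmul y z =>
      simp only [Algebra.TensorProduct.map_tmul, AlgHom.coe_id, id_eq, K3_tmul, k2_tmul]
      rw [c2_gen, hp z]
      simp only [← TensorProduct.smul_tmul', TensorProduct.tmul_smul,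
        smul_mul_assoc, map_smul, lam3_tmul]
    | add v₁ v₂ h₁ h₂ => simp only [add_mul, mul_add, add_tmul, tmul_add, map_add, antiAdE_add, adE_add, h₁, h₂]
  | add u₁ u₂ h₁ h₂ => simp only [add_mul, mul_add, add_tmul, tmul_add, map_add, antiAdE_add, adE_add, h₁, h₂]

lemma c2_absorb (η : A ⊗[K] (A ⊗[K] (A ⊗[K] A))) :
    M2 Q (((1 : A) ⊗ₜ ((1 : A) ⊗ₜ ((1 : A) ⊗ₜ p))) * η) = MM Q p η := by
  induction η using TensorProduct.induction_on with
  | zero => simp only [zero_mul, mul_zero, zero_tmul, tmul_zero, map_zero, antiAdE_zero, adE_zero]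
  | tmul w' ρ =>
    induction ρ using TensorProduct.induction_on with
    | zero => simp only [zero_mul, mul_zero, zero_tmul, tmul_zero, map_zero, antiAdE_zero, adE_zero]
    | tmul x' σ =>
      induction σ using TensorProduct.induction_on with
      | zero => simp only [zero_mul, mul_zero, zero_tmul, tmul_zero, map_zero, antiAdE_zero, adE_zero]
      | tmul y' z' => simp [Algebra.TensorProduct.tmul_mul_tmul, mul_assoc]
      | add σ₁ σ₂ h₁ h₂ => simp only [add_mul, mul_add, add_tmul, tmul_add, map_add, antiAdE_add, adE_add, h₁, h₂]
    | add ρ₁ ρ₂ h₁ h₂ => simp only [add_mul, mul_add, add_tmul, tmul_add, map_add, antiAdE_add, adE_add, h₁, h₂]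
  | add η₁ η₂ h₁ h₂ => simp only [add_mul, mul_add, add_tmul, tmul_add, map_add, antiAdE_add, adE_add, h₁, h₂]

lemma b_gen (t : A ⊗[K] A) (x' b : A) (ξ : A ⊗[K] (A ⊗[K] (A ⊗[K] A))) :
    MM Q p (ξ * (x' ⊗ₜ (Algebra.TensorProduct.assoc K K K A A A) (t ⊗ₜ b))) =
      M0' Q p (ξ * (x' ⊗ₜ ((QH.adE Q.S Q.β t) ⊗ₜ ((1 : A) ⊗ₜ b)))) := by
  induction t using TensorProduct.induction_on with
  | zero => simp only [zero_mul, mul_zero, zero_tmul, tmul_zero, map_zero, antiAdE_zero, adE_zero]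
  | tmul c d =>
    induction ξ using TensorProduct.induction_on with
    | zero => simp only [zero_mul, mul_zero, zero_tmul, tmul_zero, map_zero, antiAdE_zero, adE_zero]
    | tmul w ρ =>
      induction ρ using TensorProduct.induction_on with
      | zero => simp only [zero_mul, mul_zero, zero_tmul, tmul_zero, map_zero, antiAdE_zero, adE_zero]
      | tmul x σ =>
        induction σ using TensorProduct.induction_on with
        | zero => simp only [zero_mul, mul_zero, zero_tmul, tmul_zero, map_zero, antiAdE_zero, adE_zero]
        | tmul y z =>
          simp [Algebra.TensorProduct.tmul_mul_tmul, Q.S_mul, mul_assoc]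
        | add σ₁ σ₂ h₁ h₂ => simp only [add_mul, mul_add, add_tmul, tmul_add, map_add, antiAdE_add, adE_add, h₁, h₂]
      | add ρ₁ ρ₂ h₁ h₂ => simp only [add_mul, mul_add, add_tmul, tmul_add, map_add, antiAdE_add, adE_add, h₁, h₂]
    | add ξ₁ ξ₂ h₁ h₂ => simp only [add_mul, mul_add, add_tmul, tmul_add, map_add, antiAdE_add, adE_add, h₁, h₂]
  | add t₁ t₂ h₁ h₂ => simp only [add_mul, mul_add, add_tmul, tmul_add, map_add, antiAdE_add, adE_add, h₁, h₂]

/-- auxiliary insertion `x ⊗ z ↦ x ⊗ (β ⊗ (1 ⊗ z))`. -/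
def lamb : A ⊗[K] A →ₗ[K] A ⊗[K] (A ⊗[K] (A ⊗[K] A)) :=
  TensorProduct.map LinearMap.id
    (((TensorProduct.mk K A (A ⊗[K] A)) Q.β).comp ((TensorProduct.mk K A A) 1))

@[simp] lemma lamb_tmul (x z : A) :
    lamb Q (x ⊗ₜ[K] z) = x ⊗ₜ (Q.β ⊗ₜ ((1 : A) ⊗ₜ z)) := by
  simp [lamb]

lemma b_map (v : A ⊗[K] (A ⊗[K] A)) (ξ : A ⊗[K] (A ⊗[K] (A ⊗[K] A))) :
    MM Q p (ξ * (Algebra.TensorProduct.map (AlgHom.id K A) (QH.Δ1 Q.Δ)) v) =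
      M0' Q p (ξ * lamb Q (K2 Q v)) := by
  induction v using TensorProduct.induction_on with
  | zero => simp only [zero_mul, mul_zero, zero_tmul, tmul_zero, map_zero, antiAdE_zero, adE_zero]
  | tmul x' v' =>
    induction v' using TensorProduct.induction_on with
    | zero => simp only [zero_mul, mul_zero, zero_tmul, tmul_zero, map_zero, antiAdE_zero, adE_zero]
    | tmul y' z' =>
      simp only [Algebra.TensorProduct.map_tmul, AlgHom.coe_id, id_eq, K2_tmul, k1_tmul]
      rw [Δ1_tmul, b_gen, Q.antipode_β y']
      simp only [← TensorProduct.smul_tmul', TensorProduct.tmul_smul,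
        mul_smul_comm, smul_mul_assoc, map_smul, lamb_tmul]
    | add v₁ v₂ h₁ h₂ => simp only [add_mul, mul_add, add_tmul, tmul_add, map_add, antiAdE_add, adE_add, h₁, h₂]
  | add v₁ v₂ h₁ h₂ => simp only [add_mul, mul_add, add_tmul, tmul_add, map_add, antiAdE_add, adE_add, h₁, h₂]

lemma b_absorb (ξ : A ⊗[K] (A ⊗[K] (A ⊗[K] A))) :
    M0' Q p (ξ * ((1 : A) ⊗ₜ (Q.β ⊗ₜ ((1 : A) ⊗ₜ (1 : A))))) = MM Q p ξ := by
  induction ξ using TensorProduct.induction_on with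
  | zero => simp only [zero_mul, mul_zero, zero_tmul, tmul_zero, map_zero, antiAdE_zero, adE_zero]
  | tmul w ρ =>
    induction ρ using TensorProduct.induction_on with
    | zero => simp only [zero_mul, mul_zero, zero_tmul, tmul_zero, map_zero, antiAdE_zero, adE_zero]
    | tmul x σ =>
      induction σ using TensorProduct.induction_on with
      | zero => simp only [zero_mul, mul_zero, zero_tmul, tmul_zero, map_zero, antiAdE_zero, adE_zero]
      | tmul y z => simp [Algebra.TensorProduct.tmul_mul_tmul, mul_assoc]
      | add σ₁ σ₂ h₁ h₂ => simp only [add_mul, mul_add, add_tmul, tmul_add, map_add, antiAdE_add, adE_add, h₁, h₂]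
    | add ρ₁ ρ₂ h₁ h₂ => simp only [add_mul, mul_add, add_tmul, tmul_add, map_add, antiAdE_add, adE_add, h₁, h₂]
  | add ξ₁ ξ₂ h₁ h₂ => simp only [add_mul, mul_add, add_tmul, tmul_add, map_add, antiAdE_add, adE_add, h₁, h₂]

lemma P3_eval (u : A ⊗[K] (A ⊗[K] A)) :
    MM Q p ((Algebra.TensorProduct.map (AlgHom.id K A)
      (Algebra.TensorProduct.map (AlgHom.id K A)
        (Algebra.TensorProduct.includeLeft : A →ₐ[K] A ⊗[K] A))) u) =
      QH.sandwich Q.S Q.α Q.β u * p := by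
  induction u using TensorProduct.induction_on with
  | zero => simp [QH.sandwich]
  | tmul x v =>
    induction v using TensorProduct.induction_on with
    | zero => simp [QH.sandwich, tmul_zero]
    | tmul y z => simp [mul_assoc]
    | add v₁ v₂ h₁ h₂ =>
      simp only [tmul_add, map_add, QH.sandwich, add_mul, h₁, h₂]
  | add u₁ u₂ h₁ h₂ =>
    simp only [map_add, h₁, h₂, QH.sandwich, add_mul]

lemma MM_includeRight (v : A ⊗[K] (A ⊗[K] A)) :
    MM Q p ((Algebra.TensorProduct.includeRight :
      (A ⊗[K] (A ⊗[K] A)) →ₐ[K] A ⊗[K] (A ⊗[K] (A ⊗[K] A))) v) = Q.α * Hb Q p v := by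
  rw [Algebra.TensorProduct.includeRight_apply, MM_tmul, Q.S_one, one_mul]

/-- Key pentagon consequence: `α * W = p`. -/
lemma alpha_W (hp : ∀ a, QH.antiAdE Q.S p (Q.Δ a) = Q.ε a • p) :
    Q.α * Hb Q p Q.Φ' = p := by
  have h5 : ((Algebra.TensorProduct.includeRight :
        (A ⊗[K] (A ⊗[K] A)) →ₐ[K] A ⊗[K] (A ⊗[K] (A ⊗[K] A))) Q.Φ) *
      (Algebra.TensorProduct.includeRight :
        (A ⊗[K] (A ⊗[K] A)) →ₐ[K] A ⊗[K] (A ⊗[K] (A ⊗[K] A))) Q.Φ' = 1 := by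
    rw [← map_mul, Q.Φ_inv, map_one]
  have hkey : (Algebra.TensorProduct.assoc K K K A A (A ⊗[K] A))
        ((Algebra.TensorProduct.map Q.Δ (AlgHom.id K (A ⊗[K] A))) Q.Φ) *
      ((Algebra.TensorProduct.map (AlgHom.id K A)
        (Algebra.TensorProduct.map (AlgHom.id K A) Q.Δ)) Q.Φ *
       (Algebra.TensorProduct.includeRight :
        (A ⊗[K] (A ⊗[K] A)) →ₐ[K] A ⊗[K] (A ⊗[K] (A ⊗[K] A))) Q.Φ') =
      (Algebra.TensorProduct.map (AlgHom.id K A)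
        (Algebra.TensorProduct.map (AlgHom.id K A)
          (Algebra.TensorProduct.includeLeft : A →ₐ[K] A ⊗[K] A))) Q.Φ *
      (Algebra.TensorProduct.map (AlgHom.id K A) (QH.Δ1 Q.Δ)) Q.Φ := by
    rw [← mul_assoc, Q.pentagon, mul_assoc, h5, mul_one]
  have hL := congrArg (MM Q p) hkey
  rw [c1_map, K1_Φ, Algebra.TensorProduct.one_def, c1_absorb, c2_map Q p hp, K3_Φ,
    Algebra.TensorProduct.one_def, lam3_tmul, c2_absorb, MM_includeRight] at hL
  rw [b_map, K2_Φ, Algebra.TensorProduct.one_def, lamb_tmul, b_absorb, P3_eval,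
    Q.hopf4, one_mul] at hL
  exact hL

end QHAux
end StatementTenAux5
section StatementTenAux6
set_option maxHeartbeats 1000000
set_option synthInstance.maxHeartbeats 100000
variable {K A : Type*} [Field K] [Ring A] [Algebra K A]
namespace QHAux
variable (Q : QuasiHopf K A) (p : A)

lemma W_sandwich (hcent : ∀ b : A, b * Hb Q p Q.Φ' = Hb Q p Q.Φ' * b)
    (hWα : Hb Q p Q.Φ' * Q.α = p) (u : A ⊗[K] (A ⊗[K] A)) :
    Hb Q p Q.Φ' * QH.sandwich Q.S Q.α Q.β u = QH.sandwich Q.S p Q.β u := by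
  induction u using TensorProduct.induction_on with
  | zero => simp [QH.sandwich]
  | tmul x v =>
    induction v using TensorProduct.induction_on with
    | zero => simp [QH.sandwich, tmul_zero]
    | tmul y z =>
      rw [sandwich_tmul, sandwich_tmul]
      simp only [← mul_assoc]
      rw [← hcent (Q.S x), mul_assoc (Q.S x) (Hb Q p Q.Φ') Q.α, hWα]
    | add v₁ v₂ h₁ h₂ =>
      simp only [tmul_add, sandwich_add, mul_add, h₁, h₂]
  | add u₁ u₂ h₁ h₂ =>
    simp only [sandwich_add, mul_add, h₁, h₂]

end QHAux
end StatementTenAux6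
/-- If `c₂` is pseudo-invariant then `C₂ = Σν S(Xν) c₂ Yν β S(Zν)` is central
and `c₂ = C₂ α = α C₂`. -/
theorem statement10 {K A : Type*} [Field K] [Ring A] [Algebra K A] (Q : QuasiHopf K A) (c₂ : A)
    (hc₂ : ∀ a : A, QH.antiAd Q.Δ Q.S a c₂ = Q.ε a • c₂) :
    (∀ b : A, QH.sandwich Q.S c₂ Q.β Q.Φ * b = b * QH.sandwich Q.S c₂ Q.β Q.Φ) ∧
    c₂ = QH.sandwich Q.S c₂ Q.β Q.Φ * Q.α ∧
    c₂ = Q.α * QH.sandwich Q.S c₂ Q.β Q.Φ := by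
  have hp : ∀ a : A, QH.antiAdE Q.S c₂ (Q.Δ a) = Q.ε a • c₂ := hc₂
  have hcent := QHAux.W_central Q c₂ hp
  have hαW := QHAux.alpha_W Q c₂ hp
  have hWα : QHAux.Hb Q c₂ Q.Φ' * Q.α = c₂ := by rw [← hcent Q.α]; exact hαW
  have hEW : QH.sandwich Q.S c₂ Q.β Q.Φ = QHAux.Hb Q c₂ Q.Φ' := by
    have h := QHAux.W_sandwich Q c₂ hcent hWα Q.Φ
    rw [Q.hopf4, mul_one] at h
    exact h.symm
  refine ⟨fun b => ?_, ?_, ?_⟩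
  · rw [hEW]; exact (hcent b).symm
  · rw [hEW]; exact hWα.symm
  · rw [hEW]; exact hαW.symm
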